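/- arXiv:math/0408142 — 3 statements merged into one kernel-verified Lean document; each statement's English description precedes it below -/
import Mathlib

section
/- Let Q(x,y) = a x² + b x y + c y² be a primitive irreducible binary quadratic form with integer coefficients (so gcd(a,b,c) = 1 and b² − 4ac is not a perfect square), and let K = ℚ(√(b² − 4ac)). Then α₁ = a and α₂ = (b + √(b² − 4ac))/2 are algebraic integers in K, linearly independent over ℚ, and Q(x,y) = N_{K/ℚ}(x α₁ + y α₂)/a for all integers x, y. -/
open Module Polynomial

lemma li_one_s (K : Type*) [Field K] [Algebra ℚ K]
    (D : ℚ) (s : K) (hs : s ^ 2 = (D : K)) (hD : ∀ r : ℚ, r ^ 2 ≠ D) :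
    LinearIndependent ℚ ![(1 : K), s] := by
  haveI : CharZero K := charZero_of_injective_algebraMap (algebraMap ℚ K).injective
  rw [LinearIndependent.pair_iff]
  intro p q h
  by_cases hq : q = 0
  · subst hq
    simp only [zero_smul, add_zero] at h
    have hp : (p : K) = 0 := by
      rw [← h, Algebra.smul_def, mul_one, eq_ratCast]
    exact ⟨by exact_mod_cast hp, rfl⟩
  · exfalso
    have hq' : (q : K) ≠ 0 := by exact_mod_cast hq
    have h1 : (p : K) + (q : K) * s = 0 := by
      rw [← h, Algebra.smul_def, mul_one, Algebra.smul_def, eq_ratCast, eq_ratCast]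
    have key : ((q ^ 2 * D : ℚ) : K) = ((p ^ 2 : ℚ) : K) := by
      push_cast
      rw [← hs]
      linear_combination ((q : K) * s - (p : K)) * h1
    have key2 : q ^ 2 * D = p ^ 2 := by exact_mod_cast key
    apply hD (p / q)
    field_simp
    linarith [key2]

lemma norm_aux (K : Type*) [Field K] [Algebra ℚ K] (hrank : Module.finrank ℚ K = 2)
    (D : ℚ) (s : K) (hs : s ^ 2 = (D : K)) (hD : ∀ r : ℚ, r ^ 2 ≠ D)
    (u v : ℚ) : Algebra.norm ℚ ((u : K) + v • s) = u ^ 2 - v ^ 2 * D := by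
  haveI : CharZero K := charZero_of_injective_algebraMap (algebraMap ℚ K).injective
  have hfd : FiniteDimensional ℚ K := FiniteDimensional.of_finrank_pos (by omega)
  have li := li_one_s K D s hs hD
  let B := basisOfLinearIndependentOfCardEqFinrank li (by simp [hrank])
  have hB : ⇑B = ![(1 : K), s] := coe_basisOfLinearIndependentOfCardEqFinrank li _
  have hB0 : B 0 = 1 := by rw [hB]; rfl
  have hB1 : B 1 = s := by rw [hB]; rfl
  have hz0 : ((u : K) + v • s) * B 0 = u • B 0 + v • B 1 := by
    rw [hB0, hB1, mul_one]
    congr 1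
    rw [Algebra.smul_def, mul_one, eq_ratCast]
  have hz1 : ((u : K) + v • s) * B 1 = (v * D) • B 0 + u • B 1 := by
    rw [hB0, hB1, Algebra.smul_def, Algebra.smul_def, Algebra.smul_def,
      eq_ratCast, eq_ratCast, eq_ratCast, Rat.cast_mul, mul_one]
    linear_combination (v : K) * hs
  rw [Algebra.norm_eq_matrix_det B, Matrix.det_fin_two,
    Algebra.leftMulMatrix_eq_repr_mul, Algebra.leftMulMatrix_eq_repr_mul,
    Algebra.leftMulMatrix_eq_repr_mul, Algebra.leftMulMatrix_eq_repr_mul,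
    hz0, hz1, map_add, map_add, map_smul, map_smul, map_smul, map_smul,
    B.repr_self, B.repr_self]
  simp [Finsupp.single_apply]
  ring

/-- For a primitive irreducible binary quadratic form `a x² + b x y + c y²`
with non-square discriminant `D = b² - 4ac`, and `K = ℚ(√D)`, the elements
`α₁ = a` and `α₂ = (b + √D)/2` are algebraic integers, linearly independent
over `ℚ`, and `Q(x,y) = N_{K/ℚ}(x α₁ + y α₂)/a` for all integers `x`, `y`. -/
theorem quadratic_form_norm (K : Type*) [Field K] [Algebra ℚ K]
    (a b c : ℤ) (hprim : Int.gcd a (Int.gcd b c) = 1)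
    (hirr : ¬ IsSquare (b ^ 2 - 4 * a * c))
    (hrank : Module.finrank ℚ K = 2)
    (s : K) (hs : s ^ 2 = ((b ^ 2 - 4 * a * c : ℤ) : K)) :
    IsIntegral ℤ ((a : K)) ∧ IsIntegral ℤ (((b : K) + s) / 2) ∧
      LinearIndependent ℚ ![(a : K), ((b : K) + s) / 2] ∧
      ∀ x y : ℤ, ((a * x ^ 2 + b * x * y + c * y ^ 2 : ℤ) : ℚ) =
        Algebra.norm ℚ ((x : K) * (a : K) + (y : K) * (((b : K) + s) / 2)) / (a : ℚ) := by
  haveI : CharZero K := charZero_of_injective_algebraMap (algebraMap ℚ K).injective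
  set D : ℚ := ((b ^ 2 - 4 * a * c : ℤ) : ℚ) with hDdef
  have hsD : s ^ 2 = (D : K) := by rw [hs, hDdef, Rat.cast_intCast]
  have hs' : s ^ 2 = (b : K) ^ 2 - 4 * a * c := by rw [hs]; push_cast; ring
  have hD : ∀ r : ℚ, r ^ 2 ≠ D := by
    intro r hr
    have hint : IsIntegral ℤ r := by
      refine ⟨X ^ 2 - C (b ^ 2 - 4 * a * c), ?_, ?_⟩
      · monicity!
      · simp only [eval₂_sub, eval₂_pow, eval₂_X, eval₂_C]
        rw [show (algebraMap ℤ ℚ) (b ^ 2 - 4 * a * c) = D from by simp [hDdef]]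
        rw [hr]; ring
    obtain ⟨m, hm⟩ := IsIntegrallyClosed.isIntegral_iff.mp hint
    apply hirr
    refine ⟨m, ?_⟩
    have hmr : (m : ℚ) = r := by rw [← hm]; simp
    have : ((m * m : ℤ) : ℚ) = ((b ^ 2 - 4 * a * c : ℤ) : ℚ) := by
      push_cast [hmr]
      rw [show r * r = r ^ 2 from by ring, hr, hDdef]; push_cast; ring
    exact_mod_cast this.symm
  have ha : a ≠ 0 := fun h => hirr ⟨b, by rw [h]; ring⟩
  have haQ : (a : ℚ) ≠ 0 := Int.cast_ne_zero.mpr ha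
  have li := li_one_s K D s hsD hD
  have lipair := LinearIndependent.pair_iff.mp li
  refine ⟨?_, ?_, ?_, ?_⟩
  · exact ⟨X - C a, monic_X_sub_C a, by simp⟩
  · refine ⟨X ^ 2 - C b * X + C (a * c), ?_, ?_⟩
    · monicity!
    · simp only [eval₂_add, eval₂_sub, eval₂_mul, eval₂_pow, eval₂_X, eval₂_C]
      simp only [algebraMap_int_eq, eq_intCast]
      push_cast
      have h2 : (2 : K) ≠ 0 := two_ne_zero
      field_simp
      linear_combination hs'
  · rw [LinearIndependent.pair_iff]
    intro p q h
    have key : (p * a + q * b / 2) • (1 : K) + (q / 2) • s = 0 := by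
      rw [← h, Algebra.smul_def, Algebra.smul_def, Algebra.smul_def, Algebra.smul_def,
        eq_ratCast, eq_ratCast, eq_ratCast, eq_ratCast]
      push_cast
      ring
    obtain ⟨h1, h2⟩ := lipair _ _ key
    have hq : q = 0 := by
      field_simp at h2
      simpa using h2
    subst hq
    refine ⟨?_, rfl⟩
    have : p * (a : ℚ) = 0 := by
      rw [← h1]; push_cast; ring
    exact (mul_eq_zero.mp this).resolve_right haQ
  · intro x y
    have hz : (x : K) * (a : K) + (y : K) * (((b : K) + s) / 2) =
        (((x * a + y * b / 2 : ℚ)) : K) + ((y / 2 : ℚ)) • s := by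
      rw [Algebra.smul_def, eq_ratCast]
      push_cast
      ring
    rw [hz, norm_aux K hrank D s hsD hD]
    rw [hDdef]
    field_simp
    push_cast
    ring
end

section
/- Let d > 1 be a squarefree integer, K = ℚ(√d), and let ȷ : K → ℚ² be the ℚ-linear map sending x + y√d to (x, y) if d ≢ 1 mod 4 and to (x − y, 2y) if d ≡ 1 mod 4. Then for any A ≥ 1 and N ≥ 2, the number of z ∈ 𝒪_K with ȷ(z) ∈ [−N, N]² and |N_{K/ℚ}(z)| ≤ A is O(A(1 + log N)), with implied constant depending only on d. -/
set_option maxHeartbeats 1600000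

theorem no_rat_sqrt (d : ℤ) (hd : 1 < d) (hsf : Squarefree d) (q : ℚ) : q ^ 2 ≠ (d : ℚ) := by
  intro hq
  have hint : IsIntegral ℤ q := by
    refine ⟨Polynomial.X ^ 2 - Polynomial.C d, Polynomial.monic_X_pow_sub_C d two_ne_zero, ?_⟩
    simp only [Polynomial.eval₂_sub, Polynomial.eval₂_pow, Polynomial.eval₂_X, Polynomial.eval₂_C]
    simp [hq]
  obtain ⟨n, rfl⟩ := IsIntegrallyClosed.isIntegral_iff.mp hint
  have hn : n ^ 2 = d := by
    have : ((n : ℚ)) ^ 2 = (d : ℚ) := by push_cast at hq ⊢; exact hq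
    exact_mod_cast this
  have hu : IsUnit n := hsf n (by rw [← pow_two, hn])
  rcases Int.isUnit_iff.mp hu with h | h <;> subst h <;> simp at hn <;> omega

theorem norm_formula (d : ℤ) (hd : 1 < d) (hsf : Squarefree d)
    (K : Type*) [Field K] [NumberField K] (hrank : Module.finrank ℚ K = 2)
    (s : K) (hs : s ^ 2 = (d : K)) (x y : ℚ) :
    Algebra.norm ℚ ((x : K) + (y : K) * s) = x ^ 2 - d * y ^ 2 := by
  have hcast : ∀ q : ℚ, algebraMap ℚ K q = (q : K) := fun q => eq_ratCast _ q
  have hs0 : s ≠ 0 := by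
    intro h
    rw [h] at hs
    have : ((d : ℚ) : K) = 0 := by push_cast at hs ⊢; simp [← hs]
    have : (d : ℚ) = 0 := by
      exact_mod_cast this
    have : d = 0 := by exact_mod_cast this
    omega
  have li : LinearIndependent ℚ ![(1 : K), s] := by
    rw [linearIndependent_fin2]
    refine ⟨by simpa using hs0, fun a ha => ?_⟩
    simp only [Matrix.cons_val_one, Matrix.head_cons, Matrix.cons_val_zero] at ha
    have ha0 : a ≠ 0 := by rintro rfl; simp at ha
    have ha' : (a : K) * s = 1 := by rw [Algebra.smul_def, hcast] at ha; exact ha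
    have hsa : s = ((a : K))⁻¹ := eq_inv_of_mul_eq_one_left (by rw [mul_comm]; exact ha')
    have key : ((a⁻¹ ^ 2 : ℚ) : K) = (((d : ℚ)) : K) := by
      push_cast
      rw [← hsa, hs]
    exact no_rat_sqrt d hd hsf a⁻¹ (Rat.cast_injective key)
  have hcard : Fintype.card (Fin 2) = Module.finrank ℚ K := by simp [hrank]
  let b := basisOfLinearIndependentOfCardEqFinrank li hcard
  have hb : ⇑b = ![(1 : K), s] := coe_basisOfLinearIndependentOfCardEqFinrank li hcard
  have hb0 : b 0 = 1 := by rw [hb]; rfl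
  have hb1 : b 1 = s := by rw [hb]; rfl
  have hrepr : ∀ p q : ℚ, ∀ i, b.repr ((p : K) + (q : K) * s) i
      = (Finsupp.single (0 : Fin 2) p + Finsupp.single (1 : Fin 2) q) i := by
    intro p q i
    have : (p : K) + (q : K) * s = p • b 0 + q • b 1 := by
      rw [hb0, hb1, Algebra.smul_def, Algebra.smul_def, hcast, hcast, mul_one]
    rw [this, map_add, map_smul, map_smul, b.repr_self, b.repr_self]
    simp [Finsupp.smul_single]
  rw [Algebra.norm_eq_matrix_det b, Matrix.det_fin_two]
  have e00 : Algebra.leftMulMatrix b ((x : K) + (y : K) * s) 0 0 = x := by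
    rw [Algebra.leftMulMatrix_eq_repr_mul, hb0, mul_one, hrepr]
    simp
  have e10 : Algebra.leftMulMatrix b ((x : K) + (y : K) * s) 1 0 = y := by
    rw [Algebra.leftMulMatrix_eq_repr_mul, hb0, mul_one, hrepr]
    simp
  have hmul : ((x : K) + (y : K) * s) * b 1 = ((y * d : ℚ) : K) + ((x : ℚ) : K) * s := by
    rw [hb1]
    have : ((x : K) + (y : K) * s) * s = (x : K) * s + (y : K) * s ^ 2 := by ring
    rw [this, hs]
    push_cast
    ring
  have e01 : Algebra.leftMulMatrix b ((x : K) + (y : K) * s) 0 1 = y * d := by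
    rw [Algebra.leftMulMatrix_eq_repr_mul, hmul, hrepr]
    simp
  have e11 : Algebra.leftMulMatrix b ((x : K) + (y : K) * s) 1 1 = x := by
    rw [Algebra.leftMulMatrix_eq_repr_mul, hmul, hrepr]
    simp
  rw [e00, e01, e10, e11]
  ring

/-- In a real quadratic field `K = ℚ(√d)`, `d > 1` squarefree, with
`ȷ(x + y√d) = (x,y)` if `d ≢ 1 (mod 4)` and `(x-y, 2y)` if `d ≡ 1 (mod 4)`,
the number of `z ∈ 𝒪_K` with `ȷ(z) ∈ [-N,N]²` and `|N_{K/ℚ}(z)| ≤ A`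
is `O(A(1 + log N))`, with implied constant depending only on `d`. -/
theorem count_norm_le_real (d : ℤ) (hd : 1 < d) (hsf : Squarefree d)
    (K : Type*) [Field K] [NumberField K] (hrank : Module.finrank ℚ K = 2)
    (s : K) (hs : s ^ 2 = (d : K)) :
    ∃ C : ℝ, 0 < C ∧ ∀ A N : ℝ, 1 ≤ A → 2 ≤ N →
      (Nat.card {z : NumberField.RingOfIntegers K //
          (∃ x y : ℚ, (z : K) = (x : K) + (y : K) * s ∧
            (if d % 4 = 1 then |(x : ℝ) - (y : ℝ)| ≤ N ∧ |2 * (y : ℝ)| ≤ N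
              else |(x : ℝ)| ≤ N ∧ |(y : ℝ)| ≤ N)) ∧
          |((Algebra.norm ℚ (z : K) : ℚ) : ℝ)| ≤ A} : ℝ)
        ≤ C * A * (1 + Real.log N) := by
  classical
  have hd2 : (2 : ℝ) ≤ (d : ℝ) := by exact_mod_cast hd
  set r : ℝ := Real.sqrt (d : ℝ) with hrdef
  have hr0 : 0 ≤ r := Real.sqrt_nonneg _
  have hr2 : r ^ 2 = (d : ℝ) := Real.sq_sqrt (by linarith)
  have hr1 : 1 < r := by nlinarith
  have hlog2 : 0 < Real.log 2 := Real.log_pos one_lt_two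
  have hlog3r : 0 < Real.log (3 * r) := Real.log_pos (by linarith)
  refine ⟨15 * (2 * Real.log (3 * r) / Real.log 2 + 2 / Real.log 2 + 2), by positivity, ?_⟩
  intro A N hA hN
  have hlogN : 0 < Real.log N := Real.log_pos (by linarith)
  -- the norm of an element x + y s, as a real number
  have normR : ∀ x y : ℚ, ((Algebra.norm ℚ ((x : K) + (y : K) * s) : ℚ) : ℝ)
      = ((x : ℝ) + (y : ℝ) * r) * ((x : ℝ) - (y : ℝ) * r) := by
    intro x y
    rw [norm_formula d hd hsf K hrank s hs]
    push_cast
    nlinarith [hr2]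
  -- nonzero integers have norm at least 1
  have int_norm : ∀ w : NumberField.RingOfIntegers K, w ≠ 0 →
      1 ≤ |((Algebra.norm ℚ (w : K) : ℚ) : ℝ)| := by
    intro w hw
    have h1 : ((Algebra.norm ℤ w : ℤ) : ℚ) = Algebra.norm ℚ (w : K) := Algebra.coe_norm_int w
    have hK : (w : K) ≠ 0 := by
      simpa [NumberField.RingOfIntegers.coe_eq_zero_iff] using hw
    have hnz : Algebra.norm ℚ (w : K) ≠ 0 := by
      rw [Algebra.norm_ne_zero_iff]; exact hK
    have hn0 : (Algebra.norm ℤ w) ≠ 0 := by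
      intro h
      rw [h] at h1
      exact hnz (by exact_mod_cast h1.symm)
    have : 1 ≤ |((Algebra.norm ℤ w : ℤ) : ℝ)| := by
      exact_mod_cast Int.one_le_abs hn0
    calc (1:ℝ) ≤ |((Algebra.norm ℤ w : ℤ) : ℝ)| := this
      _ = |((Algebra.norm ℚ (w : K) : ℚ) : ℝ)| := by rw [← h1]; push_cast; ring_nf
  set S := {z : NumberField.RingOfIntegers K //
      (∃ x y : ℚ, (z : K) = (x : K) + (y : K) * s ∧
        (if d % 4 = 1 then |(x : ℝ) - (y : ℝ)| ≤ N ∧ |2 * (y : ℝ)| ≤ N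
          else |(x : ℝ)| ≤ N ∧ |(y : ℝ)| ≤ N)) ∧
      |((Algebra.norm ℚ (z : K) : ℚ) : ℝ)| ≤ A} with hS
  have hex : ∀ z : S, ∃ x y : ℚ, (z.1 : K) = (x : K) + (y : K) * s ∧
      (if d % 4 = 1 then |(x : ℝ) - (y : ℝ)| ≤ N ∧ |2 * (y : ℝ)| ≤ N
        else |(x : ℝ)| ≤ N ∧ |(y : ℝ)| ≤ N) := fun z => z.2.1
  choose X Y hcoord hbox using hex
  set u : S → ℝ := fun z => (X z : ℝ) + (Y z : ℝ) * r with hu_def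
  set v : S → ℝ := fun z => (X z : ℝ) - (Y z : ℝ) * r with hv_def
  -- coordinate bounds
  have hXY : ∀ z : S, |(X z : ℝ)| ≤ 3 / 2 * N ∧ |(Y z : ℝ)| ≤ N := by
    intro z
    have h := hbox z
    split_ifs at h with h4
    · obtain ⟨h1, h2⟩ := h
      rw [abs_le] at h1 h2 ⊢
      rw [abs_le]
      constructor <;> constructor <;> linarith
    · obtain ⟨h1, h2⟩ := h
      rw [abs_le] at h1 h2 ⊢
      rw [abs_le]
      constructor <;> constructor <;> linarith
  set B : ℝ := 3 * r * N with hB_def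
  have hB1 : 4 ≤ B := by nlinarith
  have hB0 : 0 < B := by linarith
  have huB : ∀ z : S, |u z| ≤ B := by
    intro z
    obtain ⟨h1, h2⟩ := hXY z
    have := abs_add_le ((X z : ℝ)) ((Y z : ℝ) * r)
    have h3 : |(Y z : ℝ) * r| = |(Y z : ℝ)| * r := by
      rw [abs_mul, abs_of_nonneg hr0]
    simp only [hu_def]
    nlinarith
  have hvB : ∀ z : S, |v z| ≤ B := by
    intro z
    obtain ⟨h1, h2⟩ := hXY z
    have := abs_sub ((X z : ℝ)) ((Y z : ℝ) * r)
    have h3 : |(Y z : ℝ) * r| = |(Y z : ℝ)| * r := by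
      rw [abs_mul, abs_of_nonneg hr0]
    simp only [hv_def]
    nlinarith [abs_sub_abs_le_abs_sub ((X z : ℝ)) ((Y z : ℝ) * r),
      abs_add_le ((X z : ℝ)) (-((Y z : ℝ) * r)), abs_neg ((Y z : ℝ) * r)]
  -- norm as product u * v
  have hnorm_uv : ∀ z : S, ((Algebra.norm ℚ (z.1 : K) : ℚ) : ℝ) = u z * v z := by
    intro z
    rw [hcoord z]
    exact normR (X z) (Y z)
  have huv_le : ∀ z : S, |u z * v z| ≤ A := by
    intro z
    rw [← hnorm_uv z]
    exact z.2.2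
  have huv_ge : ∀ z : S, z.1 ≠ 0 → 1 ≤ |u z * v z| := by
    intro z hz
    rw [← hnorm_uv z]
    exact int_norm z.1 hz
  set k2 : ℤ := Int.log 2 B with hk2_def
  have hBk2 : (2 : ℝ) ^ k2 ≤ B := Int.zpow_log_le_self (by norm_num) hB0
  have hBk2' : B < (2 : ℝ) ^ (k2 + 1) := Int.lt_zpow_succ_log_self (by norm_num) B
  have hk2_nonneg : 0 ≤ k2 := by
    by_contra h
    push_neg at h
    have : (2 : ℝ) ^ (k2 + 1) ≤ (2 : ℝ) ^ (0 : ℤ) :=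
      zpow_le_zpow_right₀ one_le_two (by omega)
    simp only [zpow_zero] at this
    linarith
  set M : ℤ := ⌈A⌉ with hM_def
  have hM1 : 1 ≤ M := by
    rw [hM_def]
    exact_mod_cast Int.le_ceil_iff.mpr (by norm_num; linarith)
  have hMA : (M : ℝ) ≤ 2 * A := by
    have := Int.ceil_lt_add_one A
    rw [hM_def]
    linarith
  -- per-element facts for nonzero z
  have hu_pos : ∀ z : S, z.1 ≠ 0 → 0 < |u z| := by
    intro z hz
    rcases eq_or_lt_of_le (abs_nonneg (u z)) with h | h
    · exfalso
      have := huv_ge z hz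
      rw [abs_mul, ← h] at this
      simp at this
      linarith
    · exact h
  set kk : S → ℤ := fun z => Int.log 2 |u z| with hkk_def
  have hk_low : ∀ z : S, z.1 ≠ 0 → (2:ℝ) ^ kk z ≤ |u z| := fun z hz =>
    Int.zpow_log_le_self (by norm_num) (hu_pos z hz)
  have hk_high : ∀ z : S, |u z| < (2:ℝ) ^ (kk z + 1) := fun z =>
    Int.lt_zpow_succ_log_self (by norm_num) _
  have hk_le : ∀ z : S, z.1 ≠ 0 → kk z ≤ k2 := by
    intro z hz
    have h1 : (2:ℝ) ^ kk z < (2:ℝ) ^ (k2 + 1) := lt_of_le_of_lt (le_trans (hk_low z hz) (huB z)) hBk2'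
    have := (zpow_lt_zpow_iff_right₀ (by norm_num : (1:ℝ) < 2)).mp h1
    omega
  have hk_ge : ∀ z : S, z.1 ≠ 0 → -k2 - 1 ≤ kk z := by
    intro z hz
    have h1 : 1 ≤ |u z| * B := by
      calc (1:ℝ) ≤ |u z * v z| := huv_ge z hz
        _ = |u z| * |v z| := abs_mul _ _
        _ ≤ |u z| * B := by
            have := hvB z
            have := abs_nonneg (u z)
            nlinarith
    have h2 : (2:ℝ) ^ (-k2 - 1) < |u z| := by
      have hB' : B ≤ (2:ℝ) ^ (k2 + 1) := le_of_lt hBk2'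
      have hpow : (0:ℝ) < (2:ℝ) ^ (k2+1) := by positivity
      have : 1 ≤ |u z| * (2:ℝ) ^ (k2 + 1) := by nlinarith [abs_nonneg (u z)]
      have h3 : (2:ℝ) ^ (-k2 - 1) = ((2:ℝ) ^ (k2 + 1))⁻¹ := by
        rw [← zpow_neg]
        ring_nf
      by_contra hle
      push_neg at hle
      have h5 : |u z| * B ≤ (2:ℝ) ^ (-k2 - 1) * B := by nlinarith
      have h6 : (2:ℝ) ^ (-k2 - 1) * B < (2:ℝ) ^ (-k2 - 1) * (2:ℝ) ^ (k2 + 1) := by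
        have hp2 : (0:ℝ) < (2:ℝ) ^ (-k2 - 1) := by positivity
        nlinarith
      have h7 : (2:ℝ) ^ (-k2 - 1) * (2:ℝ) ^ (k2 + 1) = 1 := by
        rw [← zpow_add₀ (by norm_num : (2:ℝ) ≠ 0)]
        norm_num
      linarith
    have h4 : (2:ℝ) ^ (-k2 - 1) < (2:ℝ) ^ (kk z + 1) := lt_of_lt_of_le h2 (le_of_lt (hk_high z))
    have := (zpow_lt_zpow_iff_right₀ (by norm_num : (1:ℝ) < 2)).mp h4
    omega
  set jj : S → ℤ := fun z => ⌊v z * (2:ℝ) ^ kk z⌋ with hjj_def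
  have hvk : ∀ z : S, z.1 ≠ 0 → |v z * (2:ℝ) ^ kk z| ≤ A := by
    intro z hz
    have h1 := hk_low z hz
    have h2 := huv_le z
    rw [abs_mul]
    have hp : (0:ℝ) < (2:ℝ) ^ kk z := by positivity
    have : |v z| * (2:ℝ) ^ kk z ≤ |v z| * |u z| := by
      have := abs_nonneg (v z)
      nlinarith
    rw [abs_mul] at h2
    rw [abs_of_pos hp]
    nlinarith [abs_nonneg (v z)]
  have hj_mem : ∀ z : S, z.1 ≠ 0 → -M ≤ jj z ∧ jj z ≤ M := by
    intro z hz
    have h := hvk z hz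
    rw [abs_le] at h
    constructor
    · rw [hjj_def]
      apply Int.le_floor.mpr
      push_cast
      calc -((M : ℤ) : ℝ) ≤ -A := by
            have hAM : A ≤ ((M : ℤ) : ℝ) := by rw [hM_def]; exact_mod_cast Int.le_ceil A
            linarith
        _ ≤ v z * (2:ℝ) ^ kk z := h.1
    · rw [hjj_def]
      have : (⌊v z * (2:ℝ) ^ kk z⌋ : ℝ) ≤ A := le_trans (Int.floor_le _) h.2
      have hAM : A ≤ (M:ℝ) := by rw [hM_def]; exact Int.le_ceil A
      exact_mod_cast le_trans this hAM
  -- the injection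
  set f : S → ℤ × ℤ × ℤ := fun z =>
    if z.1 = 0 then (0, 0, 0) else (if 0 < u z then 1 else 2, kk z, jj z) with hf_def
  set T : Finset (ℤ × ℤ × ℤ) :=
    Finset.Icc 0 2 ×ˢ (Finset.Icc (-k2 - 1) k2 ×ˢ Finset.Icc (-M) M) with hT_def
  have hmem : ∀ z : S, f z ∈ T := by
    intro z
    simp only [hf_def, hT_def]
    by_cases hz : z.1 = 0
    · rw [if_pos hz]
      simp only [Finset.mem_product, Finset.mem_Icc]
      refine ⟨⟨by norm_num, by norm_num⟩, ⟨by omega, by omega⟩, by omega, by omega⟩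
    · rw [if_neg hz]
      simp only [Finset.mem_product, Finset.mem_Icc]
      have h1 := hk_le z hz
      have h2 := hk_ge z hz
      have h3 := hj_mem z hz
      refine ⟨⟨?_, ?_⟩, ⟨h2, h1⟩, h3.1, h3.2⟩
      · split_ifs <;> norm_num
      · split_ifs <;> norm_num
  have hinj : Function.Injective f := by
    intro z w hfzw
    simp only [hf_def] at hfzw
    by_cases hz : z.1 = 0 <;> by_cases hw : w.1 = 0
    · exact Subtype.ext (hz.trans hw.symm)
    · exfalso
      rw [if_pos hz, if_neg hw] at hfzw
      have := congrArg Prod.fst hfzw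
      simp only at this
      split_ifs at this <;> omega
    · exfalso
      rw [if_neg hz, if_pos hw] at hfzw
      have := congrArg Prod.fst hfzw
      simp only at this
      split_ifs at this <;> omega
    · rw [if_neg hz, if_neg hw] at hfzw
      have he : (if 0 < u z then (1:ℤ) else 2) = (if 0 < u w then 1 else 2) :=
        congrArg Prod.fst hfzw
      have hkeq : kk z = kk w := congrArg (Prod.fst ∘ Prod.snd) hfzw
      have hjeq : jj z = jj w := congrArg (Prod.snd ∘ Prod.snd) hfzw
      by_contra hne
      -- the difference is a nonzero algebraic integer
      have hdiff : z.1 - w.1 ≠ 0 := by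
        intro h
        exact hne (Subtype.ext (sub_eq_zero.mp h))
      have hdc : ((z.1 - w.1 : NumberField.RingOfIntegers K) : K)
          = ((X z - X w : ℚ) : K) + ((Y z - Y w : ℚ) : K) * s := by
        have hsub : ((z.1 - w.1 : NumberField.RingOfIntegers K) : K) = (z.1 : K) - (w.1 : K) :=
          map_sub (algebraMap (NumberField.RingOfIntegers K) K) _ _
        rw [hsub, hcoord z, hcoord w]
        push_cast
        ring
      have hd1 : 1 ≤ |((Algebra.norm ℚ ((z.1 - w.1 : NumberField.RingOfIntegers K) : K) : ℚ) : ℝ)| :=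
        int_norm _ hdiff
      have hd2 : ((Algebra.norm ℚ ((z.1 - w.1 : NumberField.RingOfIntegers K) : K) : ℚ) : ℝ)
          = (u z - u w) * (v z - v w) := by
        rw [hdc, normR]
        push_cast
        rw [hu_def, hv_def]
        ring
      rw [hd2] at hd1
      -- |u z - u w| < 2 ^ kk z
      have husign : |u z - u w| < (2:ℝ) ^ kk z := by
        have hlz := hk_low z hz
        have hhz := hk_high z
        have hlw := hk_low w hw
        have hhw := hk_high w
        rw [← hkeq] at hlw hhw
        have h2 : ((2:ℝ) ^ (kk z + 1)) = 2 * (2:ℝ) ^ kk z := by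
          rw [zpow_add_one₀ (by norm_num : (2:ℝ) ≠ 0)]
          ring
        rw [h2] at hhz hhw
        by_cases h1 : 0 < u z <;> by_cases h2' : 0 < u w
        · rw [abs_of_pos h1] at hlz hhz
          rw [abs_of_pos h2'] at hlw hhw
          rw [abs_sub_lt_iff]
          constructor <;> linarith
        · rw [if_pos h1, if_neg h2'] at he; norm_num at he
        · rw [if_neg h1, if_pos h2'] at he; norm_num at he
        · push_neg at h1 h2'
          rw [abs_of_nonpos h1] at hlz hhz
          rw [abs_of_nonpos h2'] at hlw hhw
          rw [abs_sub_lt_iff]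
          constructor <;> linarith
      -- then |v z - v w| * 2^kk z > 1
      have hvd : 1 < |v z - v w| * (2:ℝ) ^ kk z := by
        rw [abs_mul] at hd1
        have hvpos : 0 < |v z - v w| := by
          rcases eq_or_lt_of_le (abs_nonneg (v z - v w)) with h | h
          · exfalso; rw [← h] at hd1; simp at hd1; linarith
          · exact h
        nlinarith [abs_nonneg (u z - u w)]
      have hfl : |v z * (2:ℝ) ^ kk z - v w * (2:ℝ) ^ kk z| < 1 := by
        apply Int.abs_sub_lt_one_of_floor_eq_floor
        rw [hjj_def] at hjeq
        simpa [hkeq] using hjeq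
      have : |v z - v w| * (2:ℝ) ^ kk z = |v z * (2:ℝ) ^ kk z - v w * (2:ℝ) ^ kk z| := by
        rw [← sub_mul, abs_mul, abs_of_pos (by positivity : (0:ℝ) < (2:ℝ) ^ kk z)]
      rw [this] at hvd
      linarith
  -- conclude via cardinality of T
  have hcard : Nat.card S ≤ T.card := by
    have := Nat.card_le_card_of_injective (fun z : S => (⟨f z, hmem z⟩ : T)) ?_
    · rwa [Nat.card_eq_finsetCard] at this
    · intro a b hab
      exact hinj (congrArg Subtype.val hab)
  have hTcard : (T.card : ℝ) = 3 * (2 * (k2:ℝ) + 2) * (2 * (M:ℝ) + 1) := by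
    rw [hT_def, Finset.card_product, Finset.card_product]
    rw [Int.card_Icc, Int.card_Icc, Int.card_Icc]
    rw [show (2 + 1 - 0 : ℤ) = 3 by norm_num,
      show k2 + 1 - (-k2 - 1) = 2 + k2 * 2 by ring,
      show M + 1 - -M = 1 + M * 2 by ring]
    have t1 : (((2 + k2 * 2).toNat : ℕ) : ℝ) = 2 + (k2:ℝ) * 2 := by
      rw [show (((2 + k2 * 2).toNat : ℕ) : ℝ) = ((((2 + k2 * 2).toNat : ℕ) : ℤ) : ℝ) by push_cast; ring,
        Int.toNat_of_nonneg (show (0:ℤ) ≤ 2 + k2 * 2 by omega)]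
      push_cast
      ring
    have t2 : (((1 + M * 2).toNat : ℕ) : ℝ) = 1 + (M:ℝ) * 2 := by
      rw [show (((1 + M * 2).toNat : ℕ) : ℝ) = ((((1 + M * 2).toNat : ℕ) : ℤ) : ℝ) by push_cast; ring,
        Int.toNat_of_nonneg (show (0:ℤ) ≤ 1 + M * 2 by omega)]
      push_cast
      ring
    push_cast
    rw [t1, t2]
    ring
  have hk2R : (k2 : ℝ) * Real.log 2 ≤ Real.log (3 * r) + Real.log N := by
    have h1 : Real.log ((2:ℝ) ^ k2) ≤ Real.log B := by
      apply Real.log_le_log (by positivity) hBk2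
    rw [Real.log_zpow] at h1
    rw [hB_def, show (3 * r * N : ℝ) = (3 * r) * N by ring,
      Real.log_mul (by positivity) (by positivity)] at h1
    exact h1
  set L3 := Real.log (3 * r) with hL3
  set LN := Real.log N with hLN
  have e1 : 2 * (M:ℝ) + 1 ≤ 5 * A := by linarith
  have hk2R0 : (0:ℝ) ≤ (k2:ℝ) := by exact_mod_cast hk2_nonneg
  have e2 : (0:ℝ) ≤ 2 * (k2:ℝ) + 2 := by linarith
  have e3 : 2 * (k2:ℝ) + 2 ≤ 2 * ((L3 + LN) / Real.log 2) + 2 := by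
    have := (le_div_iff₀ hlog2).mpr hk2R
    linarith
  have e4 : 2 * ((L3 + LN) / Real.log 2) + 2
      ≤ (2 * L3 / Real.log 2 + 2 / Real.log 2 + 2) * (1 + LN) := by
    have key : (2 * L3 / Real.log 2 + 2 / Real.log 2 + 2) * (1 + LN)
        - (2 * ((L3 + LN) / Real.log 2) + 2)
        = (2 * L3 / Real.log 2 + 2) * LN + 2 / Real.log 2 := by
      field_simp
      ring
    have p1 : (0:ℝ) ≤ (2 * L3 / Real.log 2 + 2) * LN :=
      mul_nonneg (by positivity) hlogN.le
    have p2 : (0:ℝ) ≤ 2 / Real.log 2 := by positivity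
    linarith
  calc (Nat.card S : ℝ) ≤ (T.card : ℝ) := by exact_mod_cast hcard
    _ = 3 * (2 * (k2:ℝ) + 2) * (2 * (M:ℝ) + 1) := hTcard
    _ ≤ (15 * A) * (2 * (k2:ℝ) + 2) := by nlinarith [mul_le_mul_of_nonneg_left e1 e2]
    _ ≤ (15 * A) * (2 * ((L3 + LN) / Real.log 2) + 2) := by
        have hA0 : (0:ℝ) ≤ 15 * A := by linarith
        exact mul_le_mul_of_nonneg_left e3 hA0
    _ ≤ (15 * A) * ((2 * L3 / Real.log 2 + 2 / Real.log 2 + 2) * (1 + LN)) := by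
        have hA0 : (0:ℝ) ≤ 15 * A := by linarith
        exact mul_le_mul_of_nonneg_left e4 hA0
    _ = 15 * (2 * L3 / Real.log 2 + 2 / Real.log 2 + 2) * A * (1 + LN) := by ring
end

section
/- Let 𝔞 be a nonzero ideal of the ring of integers 𝒪_K of a quadratic field K that is divisible by no rational integer n > 1. Then every rational integer r ∈ 𝔞 ∩ ℤ is divisible by the ideal norm N(𝔞). -/
/-!
Take a Smith normal form of `𝔞` relative to a `ℤ`-basis of `𝒪_K`: there is a basis `ω₀, ω₁` of
`𝒪_K` such that `a₀ω₀, a₁ω₁` is a basis of `𝔞`. Every common divisor of `a₀` and `a₁` divides `𝔞`,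
so `a₀` and `a₁` are coprime and `𝒪_K/𝔞 ≅ ℤ/a₀ × ℤ/a₁` is cyclic. A ring whose additive group is
cyclic has characteristic equal to its cardinality, so `N(𝔞) = char(𝒪_K/𝔞)` divides every
rational integer in `𝔞`.
-/

open Module NumberField

theorem ringChar_eq_natCard_of_isAddCyclic (R : Type*) [Ring R] [IsAddCyclic R] :
    ringChar R = Nat.card R := by
  refine Nat.dvd_antisymm (ringChar.dvd ?_) ?_
  · rw [← nsmul_one]
    exact card_nsmul_eq_zero'
  · rw [← IsAddCyclic.exponent_eq_card]
    refine AddMonoid.exponent_dvd_of_forall_nsmul_eq_zero fun x => ?_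
    rw [nsmul_eq_mul, ringChar.Nat.cast_ringChar, zero_mul]

namespace Ideal

theorem le_span_singleton_of_forall_dvd_smithCoeffs {ι R S : Type*} [CommRing R] [IsDomain R]
    [IsPrincipalIdealRing R] [CommRing S] [IsDomain S] [Algebra R S] [Fintype ι]
    (b : Basis ι R S) {I : Ideal S} (hI : I ≠ ⊥) {n : R} (hn : ∀ i, n ∣ I.smithCoeffs b hI i) :
    I ≤ span {algebraMap R S n} := by
  intro x hx
  obtain ⟨c, rfl⟩ := (Basis.mem_ideal_iff' (I.selfBasis b hI)).mp hx
  refine Submodule.sum_mem _ fun i _ => ?_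
  obtain ⟨m, hm⟩ := hn i
  rw [selfBasis_def, hm, mem_span_singleton']
  exact ⟨(c i * m) • I.ringBasis b hI i, by simp only [Algebra.smul_def, map_mul]; ring⟩

variable {S : Type*} [CommRing S] [IsDomain S]

theorem isAddCyclic_quotient_of_forall_not_le_span_intCast (b : Basis (Fin 2) ℤ S)
    {I : Ideal S} (hI : I ≠ ⊥) (hI' : ∀ n : ℤ, 1 < n → ¬ I ≤ span {(n : S)}) :
    IsAddCyclic (S ⧸ I) := by
  set a := I.smithCoeffs b hI
  have hcop : Int.gcd (a 0) (a 1) = 1 := by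
    by_contra hne
    have hpos : 0 < Int.gcd (a 0) (a 1) :=
      Int.gcd_pos_of_ne_zero_left _ (smithCoeffs_ne_zero b I hI 0)
    refine hI' (Int.gcd (a 0) (a 1)) (by omega) ?_
    simpa using le_span_singleton_of_forall_dvd_smithCoeffs b hI (n := Int.gcd (a 0) (a 1))
      (Fin.forall_fin_two.mpr ⟨Int.gcd_dvd_left _ _, Int.gcd_dvd_right _ _⟩)
  have : IsAddCyclic (ZMod (a 0).natAbs × ZMod (a 1).natAbs) :=
    AddGroup.isAddCyclic_prod_iff.mpr
      ⟨inferInstance, inferInstance, by rwa [Nat.card_zmod, Nat.card_zmod]⟩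
  exact ((I.quotientEquivPiZMod b hI).trans
    (LinearEquiv.piFinTwo ℤ fun i => ZMod (a i).natAbs).toAddEquiv).isAddCyclic.mpr this

end Ideal

/-- If `𝔞` is a nonzero ideal of the ring of integers of a quadratic field `K`
divisible by no rational integer `n > 1`, then every rational integer in `𝔞`
is divisible by the ideal norm `N(𝔞)`. -/
theorem ideal_norm_dvd_rational (K : Type*) [Field K] [NumberField K]
    (hrank : Module.finrank ℚ K = 2)
    (𝔞 : Ideal (NumberField.RingOfIntegers K)) (h0 : 𝔞 ≠ ⊥)
    (hnd : ∀ n : ℤ, 1 < n → ¬ (𝔞 ≤ Ideal.span {(n : NumberField.RingOfIntegers K)})) :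
    ∀ r : ℤ, (r : NumberField.RingOfIntegers K) ∈ 𝔞 → (Ideal.absNorm 𝔞 : ℤ) ∣ r := by
  intro r hr
  let b : Basis (Fin 2) ℤ (𝓞 K) :=
    finBasisOfFinrankEq ℤ (𝓞 K) (by rw [RingOfIntegers.rank, hrank])
  have := 𝔞.isAddCyclic_quotient_of_forall_not_le_span_intCast b h0 hnd
  have hr0 : (r : 𝓞 K ⧸ 𝔞) = 0 := by
    rwa [← map_intCast (Ideal.Quotient.mk 𝔞), Ideal.Quotient.eq_zero_iff_mem]
  rwa [Ideal.absNorm_apply, Submodule.cardQuot_apply, ← ringChar_eq_natCard_of_isAddCyclic,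
    ← CharP.intCast_eq_zero_iff (𝓞 K ⧸ 𝔞) (ringChar _)]
end
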